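/- For every t with 0 < t < 1 and every real c, the function g_{t,c} is an even function of y: g_{t,c}(−y) = g_{t,c}(y) for all real y. -/

import Mathlib

open MeasureTheory Real Set

/-- Modified Bessel function of the third kind `K_w(a)` for `a > 0`:
`K_w(a) = ∫₀^∞ e^{−a·cosh u} · cosh(w·u) du`. -/
noncomputable def Kbes (a : ℝ) (w : ℂ) : ℂ :=
  ∫ u in Ioi (0:ℝ), Complex.exp (-(a:ℂ) * (Real.cosh u : ℂ)) * Complex.cosh (w * (u:ℂ))

/-- `K_{iz}(a) = ∫₀^∞ e^{−a·cosh u} · cos(z·u) du`. -/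
noncomputable def Kiz (a : ℝ) (z : ℂ) : ℂ :=
  ∫ u in Ioi (0:ℝ), Complex.exp (-(a:ℂ) * (Real.cosh u : ℂ)) * Complex.cos (z * (u:ℂ))

/-- The real-valued function `K_{ix}(a)` for real `x`. -/
noncomputable def Kre (a x : ℝ) : ℝ :=
  ∫ u in Ioi (0:ℝ), Real.exp (-a * Real.cosh u) * Real.cos (x * u)

/-- The series `∑_{k=0}^∞ ((y+1)_k)² (1−t)^k / (k!·(k+1)!) = ₂F₁(y+1,y+1;2;1−t)`. -/
noncomputable def Sgauss (y t : ℝ) : ℝ :=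
  ∑' k : ℕ, ((ascPochhammer ℝ k).eval (y + 1))^2 * (1 - t)^k /
    ((k.factorial : ℝ) * ((k+1).factorial : ℝ))

/-- `f_t(y) = y² · t^y · ₂F₁(y+1, y+1; 2; 1−t)`. -/
noncomputable def fPol (t y : ℝ) : ℝ := y^2 * t ^ y * Sgauss y t

/-- `F_{a,c}(z) = K_{i(z−ic)}(a) + K_{i(z+ic)}(a)`. -/
noncomputable def Fac (a c : ℝ) (z : ℂ) : ℂ :=
  Kbes a (Complex.I * (z - Complex.I * (c:ℂ))) + Kbes a (Complex.I * (z + Complex.I * (c:ℂ)))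

/-- Pólya's function `Ξ*(z) = 16π² ∫₀^∞ cosh(9u/2) e^{−2π cosh 2u} cos(zu) du`. -/
noncomputable def XiStar (z : ℂ) : ℂ :=
  16 * (Real.pi : ℂ)^2 * ∫ u in Ioi (0:ℝ),
    ((Real.cosh (9*u/2) * Real.exp (-(2*Real.pi) * Real.cosh (2*u)) : ℝ) : ℂ) *
      Complex.cos (z * (u:ℂ))

/-- `S(α, β; w) = ∑_{k=0}^∞ (α)_k (β)_k w^k / (k!·(k+1)!) = ₂F₁(α, β; 2; w)`. -/
noncomputable def S2gauss (α β w : ℝ) : ℝ :=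
  ∑' k : ℕ, (ascPochhammer ℝ k).eval α * (ascPochhammer ℝ k).eval β * w^k /
    ((k.factorial : ℝ) * ((k+1).factorial : ℝ))

/-- `g_{t,c}(y)`. -/
noncomputable def gPol (t c y : ℝ) : ℝ :=
  y*(y+2*c) * t ^ (y+c) * S2gauss (y+1) (y+2*c+1) (1-t)
  + y*(y-2*c) * t ^ (y-c) * S2gauss (y+1) (y-2*c+1) (1-t)
  - 2*y^2 * t ^ y * S2gauss (y+1) (y+1) (1-t)

/-!
The three series in `g_{t,c}` are Gauss functions `₂F₁(a, b; 2; 1 - t)`, and Euler's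
transformation `₂F₁(c - a, c - b; c; w) = (1 - w)^(a + b - c) ₂F₁(a, b; c; w)` (with `c = 2`,
`w = 1 - t`) shows that `gTerm t c y = t^(y + c) ₂F₁(y + 1, y + 2c + 1; 2; 1 - t)` satisfies
`gTerm t c (-y) = gTerm t (-c) y`. Since
`g_{t,c}(y) = y(y + 2c) gTerm t c y + y(y - 2c) gTerm t (-c) y - 2y² gTerm t 0 y`,
replacing `y` by `-y` just swaps the first two terms.

Euler's transformation is proved coefficientwise: the coefficients of
`₂F₁(a, b; c; w) (1 - w)^(a + b - c)` form a Cauchy product which obeys the same first-order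
recurrence as the coefficients of `₂F₁(c - a, c - b; c; w)`.
-/

open scoped Nat
open Finset FormalMultilinearSeries

noncomputable def oneSubRpowCoeff (s : ℝ) (n : ℕ) : ℝ := (ascPochhammer ℝ n).eval (-s) / n !

theorem oneSubRpowCoeff_succ (s : ℝ) (n : ℕ) :
    (n + 1) * oneSubRpowCoeff s (n + 1) = (n - s) * oneSubRpowCoeff s n := by
  simp only [oneSubRpowCoeff, ascPochhammer_succ_eval, Nat.factorial_succ, Nat.cast_mul]
  field_simp
  push_cast
  ring

theorem Ring.choose_add_sub_one_eq_ascPochhammer_div (a : ℝ) (n : ℕ) :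
    Ring.choose (a + n - 1) n = (ascPochhammer ℝ n).eval a / n ! := by
  rw [← Ring.multichoose_eq, eq_div_iff (by positivity), mul_comm, ← nsmul_eq_mul,
    Ring.factorial_nsmul_multichoose_eq_ascPochhammer, Polynomial.ascPochhammer_smeval_eq_eval]

theorem hasFPowerSeriesOnBall_one_sub_rpow (s : ℝ) :
    HasFPowerSeriesOnBall (fun x ↦ (1 - x) ^ s) (ofScalars ℝ (oneSubRpowCoeff s)) 0 1 := by
  have h := Real.one_div_one_sub_rpow_hasFPowerSeriesOnBall_zero (-s)
  simp only [Ring.choose_add_sub_one_eq_ascPochhammer_div] at h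
  refine h.congr fun x hx ↦ ?_
  have : |x| < 1 := by simpa [enorm_eq_nnnorm] using! hx
  have : 0 ≤ 1 - x := by grind
  simp [rpow_neg this]

theorem mem_eball_zero_one_of_abs_lt {w : ℝ} (hw : |w| < 1) : w ∈ Metric.eball (0 : ℝ) 1 := by
  rwa [Metric.mem_eball, edist_zero_right, Real.enorm_eq_ofReal_abs, ENNReal.ofReal_lt_one]

theorem summable_norm_ofScalars_mul_pow {f : ℕ → ℝ} (hf : 1 ≤ (ofScalars ℝ f).radius) {w : ℝ}
    (hw : |w| < 1) : Summable fun n ↦ ‖f n * w ^ n‖ := by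
  have := (ofScalars ℝ f).summable_norm_apply
    (Metric.eball_subset_eball hf (mem_eball_zero_one_of_abs_lt hw))
  simpa [ofScalars_apply_eq, mul_comm] using this

theorem one_le_radius_ordinaryHypergeometricSeries (a b c : ℝ) :
    1 ≤ (ordinaryHypergeometricSeries ℝ a b c).radius := by
  by_cases ha : ∃ k : ℕ, a = -k
  · obtain ⟨k, rfl⟩ := ha
    simp [ordinaryHypergeometric_radius_top_of_neg_nat₁]
  by_cases hb : ∃ k : ℕ, b = -k
  · obtain ⟨k, rfl⟩ := hb
    simp [ordinaryHypergeometric_radius_top_of_neg_nat₂]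
  by_cases hc : ∃ k : ℕ, c = -k
  · obtain ⟨k, rfl⟩ := hc
    simp [ordinaryHypergeometric_radius_top_of_neg_nat₃]
  push Not at ha hb hc
  rw [ordinaryHypergeometricSeries_radius_eq_one]
  exact fun k ↦ ⟨by grind, by grind, by grind⟩

theorem ordinaryHypergeometricCoefficient_succ_mul (a b c : ℝ) {n : ℕ} (hn : c + n ≠ 0) :
    (n + 1) * (c + n) * ordinaryHypergeometricCoefficient a b c (n + 1) =
      (a + n) * (b + n) * ordinaryHypergeometricCoefficient a b c n := by
  simp only [ordinaryHypergeometricCoefficient, ascPochhammer_succ_eval, Nat.factorial_succ,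
    Nat.cast_mul, mul_inv]
  field_simp
  push_cast
  ring

section Euler

variable {a b c : ℝ}

theorem succ_mul_sum_coeff_mul_oneSubRpowCoeff (hc : ∀ k : ℕ, c + k ≠ 0) (n : ℕ) :
    (n + 1) * (c + n) * ∑ p ∈ antidiagonal (n + 1),
        ordinaryHypergeometricCoefficient a b c p.1 * oneSubRpowCoeff (a + b - c) p.2 =
      (c - a + n) * (c - b + n) * ∑ p ∈ antidiagonal n,
        ordinaryHypergeometricCoefficient a b c p.1 * oneSubRpowCoeff (a + b - c) p.2 := by
  set C := ordinaryHypergeometricCoefficient a b c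
  set d := oneSubRpowCoeff (a + b - c)
  -- On `i + j = n + 1` the weight splits as `i (i + c - 1) + j (n + c + i)`; each part is then
  -- lowered by one index with the recurrence of `C`, resp. of `d`.
  calc (n + 1) * (c + n) * ∑ p ∈ antidiagonal (n + 1), C p.1 * d p.2
      = ∑ p ∈ antidiagonal (n + 1),
          (p.1 * (p.1 + c - 1) * C p.1 * d p.2 + p.2 * (n + c + p.1) * C p.1 * d p.2) := by
        rw [mul_sum]
        refine sum_congr rfl fun p hp ↦ ?_
        have hp : (p.1 : ℝ) + p.2 = n + 1 := by exact_mod_cast HasAntidiagonal.mem_antidiagonal.1 hp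
        linear_combination -(n + c + p.1) * C p.1 * d p.2 * hp
    _ = ∑ p ∈ antidiagonal n, ((p.1 + 1) * (p.1 + c) * C (p.1 + 1) * d p.2
          + (p.2 + 1) * (n + c + p.1) * C p.1 * d (p.2 + 1)) := by
        rw [sum_add_distrib, Nat.sum_antidiagonal_succ, Nat.sum_antidiagonal_succ']
        simp only [Nat.cast_zero, zero_mul, zero_add, ← sum_add_distrib]
        refine sum_congr rfl fun p _ ↦ ?_
        push_cast
        ring
    _ = (c - a + n) * (c - b + n) * ∑ p ∈ antidiagonal n, C p.1 * d p.2 := by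
        rw [mul_sum]
        refine sum_congr rfl fun p hp ↦ ?_
        have hp : (p.1 : ℝ) + p.2 = n := by exact_mod_cast HasAntidiagonal.mem_antidiagonal.1 hp
        have hC := ordinaryHypergeometricCoefficient_succ_mul a b c (hc p.1)
        have hd := oneSubRpowCoeff_succ (a + b - c) p.2
        linear_combination d p.2 * hC + (n + c + p.1) * C p.1 * hd
          + (n + c + p.1) * C p.1 * d p.2 * hp

theorem ordinaryHypergeometricCoefficient_sub_sub (hc : ∀ k : ℕ, c + k ≠ 0) (n : ℕ) :
    ordinaryHypergeometricCoefficient (c - a) (c - b) c n = ∑ p ∈ antidiagonal n,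
      ordinaryHypergeometricCoefficient a b c p.1 * oneSubRpowCoeff (a + b - c) p.2 := by
  induction n with
  | zero => simp [oneSubRpowCoeff]
  | succ n ih =>
    refine mul_left_cancel₀ (mul_ne_zero n.cast_add_one_ne_zero (hc n)) ?_
    rw [succ_mul_sum_coeff_mul_oneSubRpowCoeff hc, ← ih,
      ordinaryHypergeometricCoefficient_succ_mul _ _ _ (hc n)]

theorem ordinaryHypergeometric_euler (hc : ∀ k : ℕ, c + k ≠ 0) {w : ℝ} (hw : |w| < 1) :
    ₂F₁ (c - a) (c - b) c w = (1 - w) ^ (a + b - c) * ₂F₁ a b c w := by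
  have hB := hasFPowerSeriesOnBall_one_sub_rpow (a + b - c)
  have hbinom : ∑' n, oneSubRpowCoeff (a + b - c) n * w ^ n = (1 - w) ^ (a + b - c) := by
    simpa [ofScalars_apply_eq, mul_comm] using
      (hB.hasSum (mem_eball_zero_one_of_abs_lt hw)).tsum_eq
  simp only [ordinaryHypergeometric, ordinaryHypergeometricSeries, FormalMultilinearSeries.sum,
    ofScalars_apply_eq, smul_eq_mul]
  rw [← hbinom, mul_comm, tsum_mul_tsum_eq_tsum_sum_antidiagonal_of_summable_norm
    (summable_norm_ofScalars_mul_pow (one_le_radius_ordinaryHypergeometricSeries a b c) hw)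
    (summable_norm_ofScalars_mul_pow hB.r_le hw)]
  refine tsum_congr fun n ↦ ?_
  rw [ordinaryHypergeometricCoefficient_sub_sub hc, sum_mul]
  refine sum_congr rfl fun p hp ↦ ?_
  rw [← HasAntidiagonal.mem_antidiagonal.1 hp, pow_add]
  ring

end Euler

theorem ascPochhammer_eval_two (n : ℕ) : (ascPochhammer ℝ n).eval 2 = (n + 1)! := by
  induction n with
  | zero => simp
  | succ n ih =>
    rw [ascPochhammer_succ_eval, ih, Nat.factorial_succ (n + 1)]
    push_cast
    ring

theorem S2gauss_eq_ordinaryHypergeometric (α β w : ℝ) : S2gauss α β w = ₂F₁ α β 2 w := by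
  simp only [S2gauss, ordinaryHypergeometric_eq_tsum, ascPochhammer_eval_two, smul_eq_mul]
  exact tsum_congr fun n ↦ by ring

theorem S2gauss_two_sub_two_sub {t : ℝ} (ht₀ : 0 < t) (ht₂ : t < 2) (α β : ℝ) :
    S2gauss (2 - α) (2 - β) (1 - t) = t ^ (α + β - 2) * S2gauss α β (1 - t) := by
  have hw : |1 - t| < 1 := abs_lt.2 ⟨by linarith, by linarith⟩
  have h2 : ∀ k : ℕ, (2 : ℝ) + k ≠ 0 := fun k ↦ by positivity
  simpa [S2gauss_eq_ordinaryHypergeometric] using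
    ordinaryHypergeometric_euler (a := α) (b := β) h2 hw

noncomputable def gTerm (t c y : ℝ) : ℝ := t ^ (y + c) * S2gauss (y + 1) (y + 2 * c + 1) (1 - t)

theorem gPol_eq_gTerm (t c y : ℝ) :
    gPol t c y = y * (y + 2 * c) * gTerm t c y + y * (y - 2 * c) * gTerm t (-c) y
      - 2 * y ^ 2 * gTerm t 0 y := by
  simp only [gPol, gTerm, ← sub_eq_add_neg, mul_neg, mul_zero, add_zero]
  ring

theorem gTerm_neg {t : ℝ} (ht₀ : 0 < t) (ht₂ : t < 2) (c y : ℝ) :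
    gTerm t c (-y) = gTerm t (-c) y := by
  have h := S2gauss_two_sub_two_sub ht₀ ht₂ (y + 1) (y - 2 * c + 1)
  rw [show 2 - (y + 1) = -y + 1 by ring, show 2 - (y - 2 * c + 1) = -y + 2 * c + 1 by ring] at h
  rw [gTerm, gTerm, h, ← mul_assoc, ← rpow_add ht₀]
  ring_nf

/-- `g_{t,c}` is an even function of `y`. -/
theorem gPol_even (t c : ℝ) (ht : 0 < t) (ht1 : t < 1) (y : ℝ) :
    gPol t c (-y) = gPol t c y := by
  have ht2 : t < 2 := by linarith
  rw [gPol_eq_gTerm, gPol_eq_gTerm, gTerm_neg ht ht2, gTerm_neg ht ht2, gTerm_neg ht ht2, neg_neg,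
    neg_zero]
  ring
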